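/- Quotient rule for F-differentiation: Let X ⊆ ℂ be a compact set and let F be a collection of Lipschitz paths in X that is closed under subpaths. Let f, g, f₁, g₁ : ℂ → ℂ be continuous on X with f₁ an F-derivative of f, g₁ an F-derivative of g, and g(x) ≠ 0 for all x ∈ X. Then f/g (pointwise quotient) is F-differentiable with F-derivative (g·f₁ − f·g₁)/g²; that is, for every path γ (on [a,b]) in F, f(γ b)/g(γ b) − f(γ a)/g(γ a) = ∫ t in a..b, ((g(γ t)·f₁(γ t) − f(γ t)·g₁(γ t))/g(γ t)²) * deriv γ t. -/

import Mathlib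

open Set intervalIntegral Filter

noncomputable section

/-- A path datum: a function `ℝ → ℂ` together with its parameter interval endpoints. -/
abbrev PathData := (ℝ → ℂ) × ℝ × ℝ

/-- `p` is a (rectifiable, modelled as Lipschitz) path in `X`. -/
def IsLipPathIn (X : Set ℂ) (p : PathData) : Prop :=
  p.2.1 < p.2.2 ∧ (∃ K : NNReal, LipschitzOnWith K p.1 (Set.Icc p.2.1 p.2.2)) ∧
    p.1 '' Set.Icc p.2.1 p.2.2 ⊆ X

/-- `g` is an `F`-derivative of `f`. -/
def IsFDeriv (F : Set PathData) (f g : ℂ → ℂ) : Prop :=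
  ∀ p ∈ F, (∫ t in p.2.1..p.2.2, g (p.1 t) * deriv p.1 t) = f (p.1 p.2.2) - f (p.1 p.2.1)

/-- `g` is a `γ`-derivative of `f` on `[a,b]`: the fundamental-theorem identity holds
along every closed subinterval of `[a,b]`. -/
def IsPathDeriv (γ : ℝ → ℂ) (a b : ℝ) (f g : ℂ → ℂ) : Prop :=
  ∀ c d : ℝ, a ≤ c → c ≤ d → d ≤ b →
    (∫ t in c..d, g (γ t) * deriv γ t) = f (γ d) - f (γ c)

/-- `γ` is admissible on `[a,b]`: nonconstant on every nondegenerate closed subinterval. -/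
def AdmissiblePath (γ : ℝ → ℂ) (a b : ℝ) : Prop :=
  ∀ c d : ℝ, a ≤ c → c < d → d ≤ b →
    ∃ s ∈ Set.Icc c d, ∃ t ∈ Set.Icc c d, γ s ≠ γ t

/-- `F` is closed under subpaths. -/
def ClosedUnderSubpaths (F : Set PathData) : Prop :=
  ∀ p ∈ F, ∀ c d : ℝ, p.2.1 ≤ c → c < d → d ≤ p.2.2 → ((p.1, c, d) : PathData) ∈ F

/-- `F` is an effective collection of paths in `X`. -/
def Effective (X : Set ℂ) (F : Set PathData) : Prop :=
  (∀ p ∈ F, IsLipPathIn X p ∧ AdmissiblePath p.1 p.2.1 p.2.2) ∧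
  ClosedUnderSubpaths F ∧
  X ⊆ closure (⋃ p ∈ F, p.1 '' Set.Icc p.2.1 p.2.2)

/-- The maximal collection `F^max` generated by `F`. -/
def MaxColl (X : Set ℂ) (F : Set PathData) : Set PathData :=
  {p | IsLipPathIn X p ∧ AdmissiblePath p.1 p.2.1 p.2.2 ∧
    ∀ f g : ℂ → ℂ, ContinuousOn f X → ContinuousOn g X → IsFDeriv F f g →
      IsPathDeriv p.1 p.2.1 p.2.2 f g}

/-- The uniform norm of `u` over `X`. -/
def supOn (u : ℂ → ℂ) (X : Set ℂ) : ℝ :=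
  sSup ((fun x => ‖u x‖) '' X)

end


/-!
Along a path `γ ∈ F` on `[a, b]`, closure under subpaths turns the `F`-derivative identities into
`f (γ d) - f (γ c) = ∫ t in c..d, f₁ (γ t) * γ' t` for all `a ≤ c ≤ d ≤ b`, and the same for `g`.
As `γ` is Lipschitz, these integrands are bounded, so `f ∘ γ` and `g ∘ γ` are Lipschitz, and by
Lebesgue's differentiation theorem they have these integrands as derivatives almost everywhere.
Since `g ∘ γ` is bounded away from `0` on the compact interval, `(f / g) ∘ γ` is Lipschitz, hence
absolutely continuous, with almost-everywhere derivative given by the ordinary quotient rule; the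
fundamental theorem of calculus for absolutely continuous functions concludes.
-/

open MeasureTheory
open scoped NNReal

section Primitive

variable {E : Type*} [NormedAddCommGroup E] [NormedSpace ℝ E] {φ u : ℝ → E} {a b : ℝ}

theorem lipschitzOnWith_of_forall_integral_eq_sub {C : ℝ≥0}
    (hφ : ∀ c d, a ≤ c → c ≤ d → d ≤ b → ∫ t in c..d, u t = φ d - φ c)
    (hu : ∀ t ∈ Ioo a b, ‖u t‖ ≤ C) :
    LipschitzOnWith C φ (Icc a b) := by
  refine LipschitzOnWith.of_dist_le_mul fun x hx y hy => ?_
  wlog hyx : y ≤ x generalizing x y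
  · rw [dist_comm, dist_comm x]; exact this y hy x hx (le_of_not_ge hyx)
  have hbound : ∀ᵐ t, t ∈ uIoc y x → ‖u t‖ ≤ C := by
    filter_upwards [(Ioo_ae_eq_Ioc (a := y) (b := x) (μ := volume)).mem_iff] with t ht htI
    rw [uIoc_of_le hyx, ← ht] at htI
    exact hu t ⟨hy.1.trans_lt htI.1, htI.2.trans_le hx.2⟩
  rw [dist_eq_norm, ← hφ y x hy.1 hyx hx.2, Real.dist_eq]
  exact intervalIntegral.norm_integral_le_of_norm_le_const_ae hbound

theorem ae_hasDerivAt_of_forall_integral_eq_sub [CompleteSpace E]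
    (hu : IntervalIntegrable u volume a b)
    (hφ : ∀ c ∈ Icc a b, ∫ t in a..c, u t = φ c - φ a) :
    ∀ᵐ t, t ∈ Ioo a b → HasDerivAt φ (u t) t := by
  filter_upwards [hu.ae_hasDerivAt_integral] with t hderiv ht
  have hprim : HasDerivAt (fun x => φ a + ∫ s in a..x, u s) (u t) t :=
    (hderiv (Icc_subset_uIcc (Ioo_subset_Icc_self ht)) a left_mem_uIcc).const_add _
  refine hprim.congr_of_eventuallyEq ?_
  filter_upwards [Icc_mem_nhds ht.1 ht.2] with x hx
  rw [hφ x hx, add_sub_cancel]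

theorem AbsolutelyContinuousOnInterval.integral_eq_sub_of_ae_hasDerivAt [CompleteSpace E]
    {C : ℝ≥0} (hφ : AbsolutelyContinuousOnInterval φ a b) (hab : a ≤ b)
    (hu : IntervalIntegrable u volume a b) (hC : ∀ t ∈ Ioo a b, ‖u t‖ ≤ C)
    (hderiv : ∀ᵐ t, t ∈ Ioo a b → HasDerivAt φ (u t) t) :
    ∫ t in a..b, u t = φ b - φ a := by
  set U : ℝ → E := fun x => ∫ t in a..x, u t with hUdef
  have hua : ∀ x ∈ Icc a b, IntervalIntegrable u volume a x := fun x hx =>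
    hu.mono_set (uIcc_subset_uIcc left_mem_uIcc (Icc_subset_uIcc hx))
  have hU : ∀ c d, a ≤ c → c ≤ d → d ≤ b → ∫ t in c..d, u t = U d - U c :=
    fun c d hac hcd hdb => (intervalIntegral.integral_interval_sub_left (hua d ⟨hac.trans hcd, hdb⟩)
      (hua c ⟨hac, hcd.trans hdb⟩)).symm
  have hUac : AbsolutelyContinuousOnInterval U a b :=
    ((lipschitzOnWith_of_forall_integral_eq_sub hU hC).mono
      (uIcc_of_le hab).le).absolutelyContinuousOnInterval
  have hderiv_zero : ∀ᵐ t, t ∈ uIcc a b → HasDerivAt (φ - U) 0 t := by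
    filter_upwards [hderiv,
      ae_hasDerivAt_of_forall_integral_eq_sub hu fun c hc => hU a c le_rfl hc.1 hc.2,
      (Ioo_ae_eq_Icc (a := a) (b := b) (μ := volume)).mem_iff] with t hφt hUt hIoo ht
    rw [uIcc_of_le hab, ← hIoo] at ht
    simpa using (hφt ht).sub (hUt ht)
  obtain ⟨K, hK⟩ := (hφ.sub hUac).const_of_ae_hasDerivAt_zero hderiv_zero
  have hb := hK b right_mem_uIcc
  have ha := hK a left_mem_uIcc
  simp only [Pi.sub_apply, hUdef, intervalIntegral.integral_same, sub_zero] at ha hb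
  rw [ha, ← hb]
  abel

end Primitive

theorem LipschitzOnWith.inv₀_of_le_norm {α 𝕜 : Type*} [PseudoMetricSpace α] [NormedField 𝕜]
    {ψ : α → 𝕜} {s : Set α} {K : ℝ≥0} {m : ℝ} (hψ : LipschitzOnWith K ψ s) (hm : 0 < m)
    (hψm : ∀ x ∈ s, m ≤ ‖ψ x‖) :
    LipschitzOnWith (Real.toNNReal (K / m ^ 2)) (fun x => (ψ x)⁻¹) s := by
  refine LipschitzOnWith.of_dist_le' fun x hx y hy => ?_
  have hx' := hm.trans_le (hψm x hx)
  have hy' := hm.trans_le (hψm y hy)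
  rw [dist_inv_inv₀ (norm_pos_iff.mp hx') (norm_pos_iff.mp hy'), div_le_iff₀ (by positivity)]
  calc dist (ψ x) (ψ y) ≤ K * dist x y := hψ.dist_le_mul x hx y hy
    _ = K / m ^ 2 * dist x y * (m * m) := by field_simp
    _ ≤ K / m ^ 2 * dist x y * (‖ψ x‖ * ‖ψ y‖) := by
      gcongr
      exacts [hψm x hx, hψm y hy]

theorem LipschitzOnWith.intervalIntegrable_deriv {E : Type*} [NormedAddCommGroup E]
    [NormedSpace ℝ E] [CompleteSpace E] {γ : ℝ → E} {a b : ℝ} {K : ℝ≥0}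
    (hγ : LipschitzOnWith K γ (Icc a b)) (hab : a ≤ b) :
    IntervalIntegrable (deriv γ) volume a b := by
  rw [intervalIntegrable_iff_integrableOn_Ioo_of_le hab]
  refine Integrable.mono' (g := fun _ => (K : ℝ)) (integrableOn_const measure_Ioo_lt_top.ne)
    (aestronglyMeasurable_deriv γ _)
    ((ae_restrict_iff' measurableSet_Ioo).mpr (ae_of_all _ fun t ht => ?_))
  exact norm_deriv_le_of_lipschitzOn (Icc_mem_nhds ht.1 ht.2) hγ

theorem LipschitzOnWith.exists_bound_mul_deriv {γ ρ : ℝ → ℂ} {a b : ℝ} {K : ℝ≥0}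
    (hγ : LipschitzOnWith K γ (Icc a b)) (hρ : ContinuousOn ρ (Icc a b)) :
    ∃ C : ℝ≥0, ∀ t ∈ Ioo a b, ‖ρ t * deriv γ t‖ ≤ C := by
  obtain ⟨M, hM⟩ := isCompact_Icc.exists_bound_of_continuousOn hρ
  refine ⟨M.toNNReal * K, fun t ht => ?_⟩
  rw [norm_mul, NNReal.coe_mul]
  exact mul_le_mul ((hM t (Ioo_subset_Icc_self ht)).trans (Real.le_coe_toNNReal M))
    (norm_deriv_le_of_lipschitzOn (Icc_mem_nhds ht.1 ht.2) hγ) (norm_nonneg _) (by positivity)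

namespace IsPathDeriv

variable {γ : ℝ → ℂ} {a b : ℝ} {K : ℝ≥0} {f f₁ g g₁ : ℂ → ℂ}

theorem exists_lipschitzOnWith (hγ : LipschitzOnWith K γ (Icc a b))
    (hf₁ : ContinuousOn f₁ (γ '' Icc a b)) (hf : IsPathDeriv γ a b f f₁) :
    ∃ L, LipschitzOnWith L (fun t => f (γ t)) (Icc a b) := by
  obtain ⟨C, hC⟩ := hγ.exists_bound_mul_deriv (hf₁.comp hγ.continuousOn (mapsTo_image γ _))
  exact ⟨C, lipschitzOnWith_of_forall_integral_eq_sub hf hC⟩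

theorem ae_hasDerivAt (hγ : LipschitzOnWith K γ (Icc a b)) (hab : a ≤ b)
    (hf₁ : ContinuousOn f₁ (γ '' Icc a b)) (hf : IsPathDeriv γ a b f f₁) :
    ∀ᵐ t, t ∈ Ioo a b → HasDerivAt (fun t => f (γ t)) (f₁ (γ t) * deriv γ t) t := by
  refine ae_hasDerivAt_of_forall_integral_eq_sub ?_ fun c hc => hf a c le_rfl hc.1 hc.2
  refine (hγ.intervalIntegrable_deriv hab).continuousOn_mul ?_
  rw [uIcc_of_le hab]
  exact hf₁.comp hγ.continuousOn (mapsTo_image γ _)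

theorem integral_div_eq_sub (hγ : LipschitzOnWith K γ (Icc a b)) (hab : a ≤ b)
    (hf₁ : ContinuousOn f₁ (γ '' Icc a b)) (hg₁ : ContinuousOn g₁ (γ '' Icc a b))
    (hne : ∀ t ∈ Icc a b, g (γ t) ≠ 0)
    (hf : IsPathDeriv γ a b f f₁) (hg : IsPathDeriv γ a b g g₁) :
    ∫ t in a..b, (g (γ t) * f₁ (γ t) - f (γ t) * g₁ (γ t)) / g (γ t) ^ 2 * deriv γ t
      = f (γ b) / g (γ b) - f (γ a) / g (γ a) := by
  have hγ_maps : MapsTo γ (Icc a b) (γ '' Icc a b) := mapsTo_image γ _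
  obtain ⟨Lf, hLf⟩ := hf.exists_lipschitzOnWith hγ hf₁
  obtain ⟨Lg, hLg⟩ := hg.exists_lipschitzOnWith hγ hg₁
  obtain ⟨m, hm, hgm⟩ := isCompact_Icc.exists_forall_le' hLg.continuousOn.norm
    fun t ht => norm_pos_iff.mpr (hne t ht)
  have hρ : ContinuousOn (fun t => (g (γ t) * f₁ (γ t) - f (γ t) * g₁ (γ t)) / g (γ t) ^ 2)
      (Icc a b) :=
    ((hLg.continuousOn.mul (hf₁.comp hγ.continuousOn hγ_maps)).sub
      (hLf.continuousOn.mul (hg₁.comp hγ.continuousOn hγ_maps))).div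
      (hLg.continuousOn.pow 2) fun t ht => pow_ne_zero 2 (hne t ht)
  obtain ⟨C, hC⟩ := hγ.exists_bound_mul_deriv hρ
  have hquot : AbsolutelyContinuousOnInterval (fun t => f (γ t) / g (γ t)) a b := by
    rw [← uIcc_of_le hab] at hLf hLg hgm
    simpa only [div_eq_mul_inv, smul_eq_mul] using hLf.absolutelyContinuousOnInterval.fun_smul
      (hLg.inv₀_of_le_norm hm hgm).absolutelyContinuousOnInterval
  refine hquot.integral_eq_sub_of_ae_hasDerivAt hab
    ((hγ.intervalIntegrable_deriv hab).continuousOn_mul (uIcc_of_le hab ▸ hρ)) hC ?_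
  filter_upwards [hf.ae_hasDerivAt hγ hab hf₁, hg.ae_hasDerivAt hγ hab hg₁] with t hφ hψ ht
  exact ((hφ ht).fun_div (hψ ht) (hne t (Ioo_subset_Icc_self ht))).congr_deriv (by ring)

end IsPathDeriv

theorem IsFDeriv.isPathDeriv {F : Set PathData} {p : PathData} {f f₁ : ℂ → ℂ}
    (hfd : IsFDeriv F f f₁) (hFsub : ClosedUnderSubpaths F) (hp : p ∈ F) :
    IsPathDeriv p.1 p.2.1 p.2.2 f f₁ := by
  intro c d hac hcd hdb
  rcases hcd.eq_or_lt with rfl | hlt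
  · simp
  · exact hfd _ (hFsub p hp c d hac hlt hdb)

theorem fDeriv_quotient_rule_general (X : Set ℂ)
    (F : Set PathData) (hFX : ∀ p ∈ F, IsLipPathIn X p)
    (hFsub : ClosedUnderSubpaths F)
    (f g f₁ g₁ : ℂ → ℂ)
    (hf₁ : ContinuousOn f₁ X) (hg₁ : ContinuousOn g₁ X)
    (hfd : IsFDeriv F f f₁) (hgd : IsFDeriv F g g₁)
    (hne : ∀ x ∈ X, g x ≠ 0) :
    IsFDeriv F (fun x => f x / g x)
      (fun x => (g x * f₁ x - f x * g₁ x) / (g x) ^ 2) := by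
  intro p hp
  obtain ⟨hab, ⟨K, hK⟩, himg⟩ := hFX p hp
  exact (hfd.isPathDeriv hFsub hp).integral_div_eq_sub hK hab.le (hf₁.mono himg)
    (hg₁.mono himg) (fun t ht => hne _ (himg (mem_image_of_mem _ ht)))
    (hgd.isPathDeriv hFsub hp)

/-- Quotient rule for `F`-differentiation. -/
theorem fDeriv_quotient_rule (X : Set ℂ) (hX : IsCompact X)
    (F : Set PathData) (hFX : ∀ p ∈ F, IsLipPathIn X p)
    (hFsub : ClosedUnderSubpaths F)
    (f g f₁ g₁ : ℂ → ℂ)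
    (hf : ContinuousOn f X) (hg : ContinuousOn g X)
    (hf₁ : ContinuousOn f₁ X) (hg₁ : ContinuousOn g₁ X)
    (hfd : IsFDeriv F f f₁) (hgd : IsFDeriv F g g₁)
    (hne : ∀ x ∈ X, g x ≠ 0) :
    IsFDeriv F (fun x => f x / g x)
      (fun x => (g x * f₁ x - f x * g₁ x) / (g x) ^ 2) :=
  fDeriv_quotient_rule_general X F hFX hFsub f g f₁ g₁ hf₁ hg₁ hfd hgd hne
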